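/- Let 0 < σ ≤ 1/2, β ∈ ℝ, 0 < ε < 1, and let f_ε be the regularization of f(ρ) = β ρ^σ as above. Then there is a constant C₂ depending only on σ and β such that |√ρ f_ε'(ρ)| + |ρ^{3/2} f_ε''(ρ)| ≤ C₂ ε^{2σ-1} for all ρ ≥ 0. -/

import Mathlib

/-- Generalized binomial coefficient `binom(x, j) = x(x-1)⋯(x-j+1)/j!`. -/
noncomputable def gbinom (x : ℝ) (j : ℕ) : ℝ :=
  (∏ i ∈ Finset.range j, (x - i)) / (Nat.factorial j)

/-- The cubic polynomial `Q_ε(ρ) = β ε^{2σ-2} Σ_{j=0}^{3} binom(j-σ, j)(1-ρ/ε²)^j`. -/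
noncomputable def Qreg (σ β ε ρ : ℝ) : ℝ :=
  β * ε ^ (2 * σ - 2) *
    ∑ j ∈ Finset.range 4, gbinom ((j : ℝ) - σ) j * (1 - ρ / ε ^ 2) ^ j

/-- The local regularization `f_ε` of `f(ρ) = β ρ^σ`. -/
noncomputable def freg (σ β ε ρ : ℝ) : ℝ :=
  if ε ^ 2 ≤ ρ then β * ρ ^ σ else ρ * Qreg σ β ε ρ

/-!
Writing `t = ρ / ε²`, one has `f_ε(ρ) = ε^{2σ} f₁(t)`, and under this substitution both
`√ρ f_ε'(ρ)` and `ρ^{3/2} f_ε''(ρ)` acquire the common factor `ε^{2σ-1}`; so it suffices to bound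
`√t f₁'(t)` and `t^{3/2} f₁''(t)` uniformly in `t ≥ 0`. For `t ≥ 1` both are multiples of
`t^{σ-1/2} ≤ 1`. For `t < 1` they come from the polynomial piece, which is bounded on `[0, 1]`.
Since `Q` is built from the Taylor polynomial of `(1 - u)^{-σ}`, the two pieces of `f₁` agree to
second order at `t = 1`, so the piecewise formulas for `f₁'` and `f₁''` also hold there.
-/

open Polynomial

theorem hasDerivAt_ite_le {f f' g g' : ℝ → ℝ} {a : ℝ}
    (hf : ∀ x ≤ a, HasDerivAt f (f' x) x) (hg : ∀ x, a ≤ x → HasDerivAt g (g' x) x)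
    (h₀ : f a = g a) (h₁ : f' a = g' a) (x : ℝ) :
    HasDerivAt (fun x => if a ≤ x then g x else f x) (if a ≤ x then g' x else f' x) x := by
  rcases lt_trichotomy x a with hx | rfl | hx
  · rw [if_neg hx.not_ge]
    refine (hf x hx.le).congr_of_eventuallyEq ?_
    filter_upwards [Iio_mem_nhds hx] with y hy
    rw [if_neg (not_le.2 hy)]
  · rw [if_pos le_rfl]
    have hL : HasDerivWithinAt (fun y => if x ≤ y then g y else f y) (g' x) (Set.Iic x) x := by
      rw [← h₁]
      refine (hf x le_rfl).hasDerivWithinAt.congr (fun y hy => ?_) (by simp [h₀])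
      rcases (Set.mem_Iic.1 hy).lt_or_eq with h | rfl
      · rw [if_neg h.not_ge]
      · simp [h₀]
    have hR : HasDerivWithinAt (fun y => if x ≤ y then g y else f y) (g' x) (Set.Ici x) x :=
      (hg x le_rfl).hasDerivWithinAt.congr (fun y hy => if_pos hy) (if_pos le_rfl)
    simpa [Set.Iic_union_Ici] using hL.union hR
  · rw [if_pos hx.le]
    refine (hg x hx.le).congr_of_eventuallyEq ?_
    filter_upwards [Ioi_mem_nhds hx] with y hy
    rw [if_pos (le_of_lt hy)]

/-- `X · T(1 - X)`, where `T` is the cubic Taylor polynomial of `(1 - u)^{-σ}` at `0`. -/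
noncomputable def regPoly (σ : ℝ) : ℝ[X] :=
  X * ∑ j ∈ Finset.range 4, C (gbinom ((j : ℝ) - σ) j) * (1 - X) ^ j

lemma regPoly_eval_one (σ : ℝ) : (regPoly σ).eval 1 = 1 := by
  simp [regPoly, Finset.sum_range_succ, gbinom]

lemma derivative_regPoly_eval_one (σ : ℝ) : (derivative (regPoly σ)).eval 1 = σ := by
  simp [regPoly, Finset.sum_range_succ, gbinom, Finset.prod_range_succ, Nat.factorial, derivative_pow]

lemma derivative_derivative_regPoly_eval_one (σ : ℝ) :
    (derivative (derivative (regPoly σ))).eval 1 = σ * (σ - 1) := by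
  simp [regPoly, Finset.sum_range_succ, gbinom, Finset.prod_range_succ, Nat.factorial, derivative_pow]
  ring

/-- `f₁`, the regularization at scale `ε = 1`. -/
noncomputable def regProfile (σ β t : ℝ) : ℝ :=
  if 1 ≤ t then β * t ^ σ else β * (regPoly σ).eval t

lemma deriv_regProfile (σ β : ℝ) :
    deriv (regProfile σ β) =
      fun t => if 1 ≤ t then β * σ * t ^ (σ - 1) else β * (derivative (regPoly σ)).eval t := by
  funext t
  refine (hasDerivAt_ite_le (a := 1) (f := fun x => β * (regPoly σ).eval x) (g := fun x => β * x ^ σ)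
    (f' := fun x => β * (derivative (regPoly σ)).eval x) (g' := fun x => β * σ * x ^ (σ - 1))
    (fun x _ => ((regPoly σ).hasDerivAt x).const_mul β) (fun x hx => ?_)
    (by simp [regPoly_eval_one]) (by simp [derivative_regPoly_eval_one]) t).deriv
  exact ((Real.hasDerivAt_rpow_const (Or.inl (by positivity))).const_mul β).congr_deriv (by ring)

lemma iteratedDeriv_two_regProfile (σ β : ℝ) :
    iteratedDeriv 2 (regProfile σ β) =
      fun t => if 1 ≤ t then β * σ * (σ - 1) * t ^ (σ - 2)
        else β * (derivative (derivative (regPoly σ))).eval t := by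
  rw [iteratedDeriv_succ, iteratedDeriv_one, deriv_regProfile]
  funext t
  refine (hasDerivAt_ite_le (a := 1) (f := fun x => β * (derivative (regPoly σ)).eval x)
    (g := fun x => β * σ * x ^ (σ - 1))
    (f' := fun x => β * (derivative (derivative (regPoly σ))).eval x)
    (g' := fun x => β * σ * (σ - 1) * x ^ (σ - 2))
    (fun x _ => ((derivative (regPoly σ)).hasDerivAt x).const_mul β) (fun x hx => ?_)
    (by simp [derivative_regPoly_eval_one]) (by simp [derivative_derivative_regPoly_eval_one]; ring)
    t).deriv
  refine ((Real.hasDerivAt_rpow_const (Or.inl (by positivity))).const_mul (β * σ)).congr_deriv ?_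
  rw [sub_sub, one_add_one_eq_two]
  ring

noncomputable def weightedDerivSum (u : ℝ → ℝ) (x : ℝ) : ℝ :=
  |Real.sqrt x * deriv u x| + |x ^ ((3 : ℝ) / 2) * iteratedDeriv 2 u x|

lemma exists_bound_weightedDerivSum_regProfile (σ β : ℝ) (hσ : σ ≤ 1 / 2) :
    ∃ C : ℝ, 0 < C ∧ ∀ t : ℝ, 0 ≤ t → weightedDerivSum (regProfile σ β) t ≤ C := by
  obtain ⟨M, hM⟩ := (isCompact_Icc (a := (0 : ℝ)) (b := 1)).exists_bound_of_continuousOn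
    (f := fun t => |Real.sqrt t * (β * (derivative (regPoly σ)).eval t)|
      + |t ^ ((3 : ℝ) / 2) * (β * (derivative (derivative (regPoly σ))).eval t)|)
    (Continuous.continuousOn (by fun_prop (disch := norm_num)))
  refine ⟨|M| + |β * σ| + |β * σ * (σ - 1)| + 1, by positivity, fun t ht => ?_⟩
  rw [weightedDerivSum, deriv_regProfile, iteratedDeriv_two_regProfile]
  by_cases h1 : 1 ≤ t
  · simp only [if_pos h1]
    have ht0 : 0 < t := by linarith
    have hle : t ^ (σ - 1 / 2) ≤ 1 := Real.rpow_le_one_of_one_le_of_nonpos h1 (by linarith)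
    have e1 : Real.sqrt t * (β * σ * t ^ (σ - 1)) = β * σ * t ^ (σ - 1 / 2) := by
      rw [Real.sqrt_eq_rpow, mul_left_comm, ← Real.rpow_add ht0]
      ring_nf
    have e2 : t ^ ((3 : ℝ) / 2) * (β * σ * (σ - 1) * t ^ (σ - 2))
        = β * σ * (σ - 1) * t ^ (σ - 1 / 2) := by
      rw [mul_left_comm, ← Real.rpow_add ht0]
      ring_nf
    rw [e1, e2, abs_mul, abs_mul _ (t ^ _), abs_of_pos (Real.rpow_pos_of_pos ht0 _)]
    have h₁ := mul_le_of_le_one_right (abs_nonneg (β * σ)) hle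
    have h₂ := mul_le_of_le_one_right (abs_nonneg (β * σ * (σ - 1))) hle
    linarith [abs_nonneg M]
  · simp only [if_neg h1]
    have := hM t ⟨ht, le_of_not_ge h1⟩
    rw [Real.norm_eq_abs, abs_of_nonneg (by positivity)] at this
    linarith [le_abs_self M, abs_nonneg (β * σ), abs_nonneg (β * σ * (σ - 1))]

lemma deriv_const_mul_comp_mul_left (k c : ℝ) (u : ℝ → ℝ) :
    deriv (fun x => k * u (c * x)) = fun x => k * c * deriv u (c * x) := by
  funext x
  rw [deriv_const_mul_field, deriv_comp_mul_left, smul_eq_mul, mul_assoc]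

lemma iteratedDeriv_two_const_mul_comp_mul_left (k c : ℝ) (u : ℝ → ℝ) :
    iteratedDeriv 2 (fun x => k * u (c * x)) = fun x => k * c ^ 2 * iteratedDeriv 2 u (c * x) := by
  rw [iteratedDeriv_succ, iteratedDeriv_one, deriv_const_mul_comp_mul_left,
    deriv_const_mul_comp_mul_left, iteratedDeriv_succ, iteratedDeriv_one]
  ring_nf

lemma freg_eq_regProfile {ε : ℝ} (hε : 0 < ε) (σ β : ℝ) :
    freg σ β ε = fun ρ => ε ^ (2 * σ) * regProfile σ β ((ε ^ 2)⁻¹ * ρ) := by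
  have hε2 : (ε ^ 2) ^ σ = ε ^ (2 * σ) := by
    rw [← Real.rpow_natCast, ← Real.rpow_mul hε.le]; norm_num
  funext ρ
  have hcond : ε ^ 2 ≤ ρ ↔ 1 ≤ (ε ^ 2)⁻¹ * ρ := by
    rw [← div_eq_inv_mul, one_le_div (by positivity)]
  simp only [freg, regProfile, hcond]
  split_ifs with h
  · have hρ : 0 ≤ ρ := by linarith [hcond.mpr h, pow_pos hε 2]
    rw [Real.mul_rpow (by positivity) hρ, Real.inv_rpow (by positivity), hε2]
    field_simp
  · have hsub : ε ^ (2 * σ - 2) = ε ^ (2 * σ) / ε ^ 2 := by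
      rw [Real.rpow_sub hε, Real.rpow_two]
    simp only [Qreg, hsub, Finset.mul_sum, regPoly, eval_finsetSum, eval_mul, eval_X, eval_C,
      eval_pow, eval_sub, eval_one]
    field_simp

lemma weightedDerivSum_rescale {ε : ℝ} (hε : 0 < ε) (s : ℝ) (u : ℝ → ℝ) {x : ℝ} (hx : 0 ≤ x) :
    weightedDerivSum (fun y => ε ^ s * u ((ε ^ 2)⁻¹ * y)) x
      = ε ^ (s - 1) * weightedDerivSum u ((ε ^ 2)⁻¹ * x) := by
  set t := (ε ^ 2)⁻¹ * x with ht
  have hxt : x = ε ^ 2 * t := by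
    rw [ht]
    field_simp
  have hsqrt : Real.sqrt x = ε * Real.sqrt t := by
    rw [hxt, Real.sqrt_mul (by positivity), Real.sqrt_sq hε.le]
  have hpow : x ^ ((3 : ℝ) / 2) = ε ^ 3 * t ^ ((3 : ℝ) / 2) := by
    rw [hxt, Real.mul_rpow (by positivity) (by positivity), ← Real.rpow_natCast,
      ← Real.rpow_mul hε.le]
    norm_num
  have hscale : ε ^ s = ε * ε ^ (s - 1) := by
    simpa only [Real.rpow_one, add_sub_cancel] using Real.rpow_add hε 1 (s - 1)
  have e1 : ε * Real.sqrt t * (ε * ε ^ (s - 1) * (ε ^ 2)⁻¹ * deriv u t)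
      = ε ^ (s - 1) * (Real.sqrt t * deriv u t) := by
    field_simp
  have e2 : ε ^ 3 * t ^ ((3 : ℝ) / 2) * (ε * ε ^ (s - 1) * ((ε ^ 2)⁻¹) ^ 2 * iteratedDeriv 2 u t)
      = ε ^ (s - 1) * (t ^ ((3 : ℝ) / 2) * iteratedDeriv 2 u t) := by
    field_simp
  rw [weightedDerivSum, weightedDerivSum, deriv_const_mul_comp_mul_left,
    iteratedDeriv_two_const_mul_comp_mul_left, hsqrt, hpow, hscale, e1, e2, abs_mul,
    abs_mul _ (_ * _), abs_of_pos (Real.rpow_pos_of_pos hε _), ← mul_add]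

theorem stmt12_general (σ β : ℝ) (hσ : σ ≤ 1 / 2) :
    ∃ C₂ : ℝ, 0 < C₂ ∧ ∀ ε : ℝ, 0 < ε → ε < 1 → ∀ ρ : ℝ, 0 ≤ ρ →
      |Real.sqrt ρ * deriv (freg σ β ε) ρ|
          + |ρ ^ ((3 : ℝ) / 2) * iteratedDeriv 2 (freg σ β ε) ρ|
        ≤ C₂ * ε ^ (2 * σ - 1) := by
  obtain ⟨C, hC, hbound⟩ := exists_bound_weightedDerivSum_regProfile σ β hσ
  refine ⟨C, hC, fun ε hε _ ρ hρ => ?_⟩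
  change weightedDerivSum (freg σ β ε) ρ ≤ _
  rw [freg_eq_regProfile hε, weightedDerivSum_rescale hε _ _ hρ, mul_comm C]
  exact mul_le_mul_of_nonneg_left (hbound _ (by positivity)) (Real.rpow_nonneg hε.le _)

/-- For `0 < σ ≤ 1/2`: `|√ρ f_ε'(ρ)| + |ρ^{3/2} f_ε''(ρ)| ≤ C₂ ε^{2σ-1}` for all `ρ ≥ 0`. -/
theorem stmt12 (σ β : ℝ) (hσ0 : 0 < σ) (hσ : σ ≤ 1 / 2) :
    ∃ C₂ : ℝ, 0 < C₂ ∧ ∀ ε : ℝ, 0 < ε → ε < 1 → ∀ ρ : ℝ, 0 ≤ ρ →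
      |Real.sqrt ρ * deriv (freg σ β ε) ρ|
          + |ρ ^ ((3 : ℝ) / 2) * iteratedDeriv 2 (freg σ β ε) ρ|
        ≤ C₂ * ε ^ (2 * σ - 1) :=
  stmt12_general σ β hσ
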